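/- arXiv:1207.4771 — 5 statements merged into one kernel-verified Lean document; each statement's English description precedes it below -/
import Mathlib

section
/- Let α be a finite type with decidable equality, let g be a permutation of α, and let f be a permutation of α × Bool lifting g (i.e. (f (a,b)).1 = g a for all a : α, b : Bool). Let R be a finite subset of α containing exactly one representative of each cycle of g, i.e. for every x : α there is a unique a with a ∈ R and g.SameCycle x a. Then the sign of f equals the product over a ∈ R of ε(a), where ε(a) = 1 if (f ^ ℓ(a)) (a، true) = (a, true) and ε(a) = −1 otherwise; here ℓ(a) = Function.minimalPeriod g a. In symbols: Equiv.Perm.sign f = ∏_{a ∈ R} (if (f ^ Function.minimalPeriod g a) (a, true) = (a, true) then 1 else -1). -/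
/-!
A lift `f` of `g` is `(a, b) ↦ (g a, τₐ b)` for permutations `τₐ` of `Bool`, i.e. `g × id`
composed with the fibrewise permutation `(a, b) ↦ (a, τₐ b)`; hence
`sign f = (sign g)² · ∏ₐ sign τₐ = ∏ₐ sign τₐ`. Over a cycle representative `a`, the fibre
permutation of `f ^ ℓ(a)` is the composite of the `τ` along the cycle of `a`, so its sign is the
product of their signs; a permutation of `Bool` has sign `1` exactly when it fixes `true`.
Grouping the product over `α` by cycles gives the formula.
-/

open Finset Function

namespace Equiv.Perm

variable {α β : Type*}

def IsLift (g : Perm α) (f : Perm (α × β)) : Prop :=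
  ∀ a b, (f (a, b)).1 = g a

namespace IsLift

variable {g : Perm α} {f : Perm (α × β)}

theorem pow (hf : IsLift g f) : ∀ n : ℕ, IsLift (g ^ n) (f ^ n)
  | 0 => fun _ _ => rfl
  | n + 1 => fun a b => by
    rw [pow_succ', pow_succ', mul_apply, mul_apply, ← hf.pow n a b]
    exact hf _ _

theorem apply_eq_mk (hf : IsLift g f) (a : α) (b : β) : f (a, b) = (g a, (f (a, b)).2) :=
  Prod.ext (hf a b) rfl

theorem symm_apply_eq_mk (hf : IsLift g f) (a : α) (b : β) :
    f.symm (g a, b) = (a, (f.symm (g a, b)).2) :=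
  Prod.ext (g.injective <| by rw [← hf, apply_symm_apply]) rfl

def fiberPerm (hf : IsLift g f) (a : α) : Perm β where
  toFun b := (f (a, b)).2
  invFun b := (f.symm (g a, b)).2
  left_inv b := by simp only [← hf.apply_eq_mk, symm_apply_apply]
  right_inv b := by simp only [← hf.symm_apply_eq_mk, apply_symm_apply]

theorem fiberPerm_apply (hf : IsLift g f) (a : α) (b : β) : hf.fiberPerm a b = (f (a, b)).2 := rfl

theorem fiberPerm_pow_succ (hf : IsLift g f) (n : ℕ) (a : α) :
    (hf.pow (n + 1)).fiberPerm a = hf.fiberPerm ((g ^ n) a) * (hf.pow n).fiberPerm a := by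
  ext b
  rw [fiberPerm_apply, pow_succ', mul_apply, (hf.pow n).apply_eq_mk a b]
  rfl

theorem sign_fiberPerm_pow [Fintype β] [DecidableEq β] (hf : IsLift g f) (n : ℕ) (a : α) :
    sign ((hf.pow n).fiberPerm a) = ∏ i ∈ range n, sign (hf.fiberPerm ((g ^ i) a)) := by
  induction n with
  | zero =>
    rw [prod_range_zero, ← sign_one (α := β)]
    rfl
  | succ n ih => rw [fiberPerm_pow_succ, sign_mul, ih, prod_range_succ, mul_comm]

theorem eq_prodCongrLeft_mul_prodCongrRight (hf : IsLift g f) :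
    f = prodCongrLeft (fun _ => g) * prodCongrRight hf.fiberPerm :=
  Equiv.ext fun ⟨a, b⟩ => hf.apply_eq_mk a b

theorem sign_eq [Fintype α] [DecidableEq α] [Fintype β] [DecidableEq β] (hf : IsLift g f) :
    sign f = sign g ^ Fintype.card β * ∏ a, sign (hf.fiberPerm a) := by
  rw [congrArg sign hf.eq_prodCongrLeft_mul_prodCongrRight, sign_mul, sign_prodCongrLeft,
    sign_prodCongrRight, prod_const, card_univ]

end IsLift

theorem sign_bool (σ : Perm Bool) : sign σ = if σ true = true then 1 else -1 := by
  revert σ; decide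

theorem SameCycle.exists_lt_minimalPeriod_pow_eq [Finite α] {g : Perm α} {a x : α}
    (h : g.SameCycle a x) : ∃ i < minimalPeriod g a, (g ^ i) a = x := by
  obtain ⟨i, rfl⟩ := h.exists_nat_pow_eq
  refine ⟨i % minimalPeriod g a, Nat.mod_lt _ ?_, ?_⟩
  · exact minimalPeriod_pos_of_mem_periodicPts (g.injective.mem_periodicPts a)
  · rw [← iterate_eq_pow, ← iterate_eq_pow, iterate_mod_minimalPeriod_eq]

theorem prod_univ_eq_prod_range_minimalPeriod {M : Type*} [CommMonoid M] [Fintype α] (g : Perm α)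
    (R : Finset α) (hR : ∀ x : α, ∃! a : α, a ∈ R ∧ g.SameCycle x a) (φ : α → M) :
    ∏ x, φ x = ∏ a ∈ R, ∏ i ∈ range (minimalPeriod g a), φ ((g ^ i) a) := by
  rw [prod_sigma']
  symm
  refine prod_bij (fun p _ => (g ^ p.2) p.1) (fun _ _ => mem_univ _) ?_ ?_ (fun _ _ => rfl)
  · rintro ⟨a, i⟩ hai ⟨a', i'⟩ hai' h
    simp only [mem_sigma, mem_range] at hai hai' h
    have hsame : g.SameCycle ((g ^ i) a) a' := by
      rw [h]; exact (SameCycle.refl _ _).pow_left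
    obtain rfl : a = a' :=
      (hR _).unique ⟨hai.1, (SameCycle.refl _ _).pow_left⟩ ⟨hai'.1, hsame⟩
    rw [← iterate_eq_pow, ← iterate_eq_pow] at h
    rw [iterate_injOn_Iio_minimalPeriod hai.2 hai'.2 h]
  · intro x _
    obtain ⟨a, ⟨ha, hxa⟩, -⟩ := hR x
    obtain ⟨i, hi, rfl⟩ := hxa.symm.exists_lt_minimalPeriod_pow_eq
    exact ⟨⟨a, i⟩, mem_sigma.2 ⟨ha, mem_range.2 hi⟩, rfl⟩

end Equiv.Perm

open Equiv.Perm in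
theorem sign_of_lift_eq_prod_over_cycle_reps
    {α : Type*} [Fintype α] [DecidableEq α]
    (g : Equiv.Perm α) (f : Equiv.Perm (α × Bool))
    (hf : ∀ (a : α) (b : Bool), (f (a, b)).1 = g a)
    (R : Finset α)
    (hR : ∀ x : α, ∃! a : α, a ∈ R ∧ g.SameCycle x a) :
    Equiv.Perm.sign f =
      ∏ a ∈ R,
        (if (f ^ Function.minimalPeriod g a) (a, true) = (a, true)
          then (1 : ℤˣ) else -1) := by
  have hlift : IsLift g f := hf
  rw [hlift.sign_eq, Fintype.card_bool, Int.units_sq, one_mul,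
    prod_univ_eq_prod_range_minimalPeriod g R hR]
  refine prod_congr rfl fun a _ => ?_
  rw [← hlift.sign_fiberPerm_pow, sign_bool, (hlift.pow _).apply_eq_mk,
    ← iterate_eq_pow, iterate_minimalPeriod]
  simp only [Prod.mk.injEq, true_and]
  rfl
end

section
/- Let α be a finite type with decidable equality, let g be a permutation of α, and let f₁, f₂ be two permutations of α × Bool both lifting g (i.e. (fᵢ (a,b)).1 = g a for all a, b). If for every a : α one has (f₁ ^ ℓ(a)) (a, true) = (a, true) ↔ (f₂ ^ ℓ(a)) (a, true) = (a, true), where ℓ(a) = Function.minimalPeriod g a, then Equiv.Perm.sign f₁ = Equiv.Perm.sign f₂. In other words, the sign of a lift of g depends only on the data of which fibers it swaps. -/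
/-!
A lift of `g` is a shear `(a, b) ↦ (g a, σ a b)` with `σ a : Perm Bool`, so its sign is
`sign g ^ 2 * ∏ₐ sign (σ a) = ∏ₐ sign (σ a)`. Over a `g`-cycle of length `ℓ`, the `ℓ`-th power
of the lift acts on a fiber by the composite of the `σ`'s along the cycle, which swaps the fiber
exactly when the product of their signs is `-1`. Hence the swap data determine the product of
`sign ∘ σ` over every cycle, and so over all of `α`.
-/

open Finset Function

namespace Equiv.Perm

variable {α β M : Type*}

theorem prod_sameCycle_eq_prod_range [Fintype α] [DecidableEq α] [CommMonoid M]
    (g : Perm α) [DecidableRel g.SameCycle] (u : α → M) (x : α) :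
    ∏ y with g.SameCycle x y, u y = ∏ k ∈ range (minimalPeriod g x), u ((g ^ k) x) := by
  have hinj : Set.InjOn (fun k => (g ^ k) x) (range (minimalPeriod g x)) := by
    intro m hm n hn hmn
    simp only [← iterate_eq_pow] at hmn
    exact (iterate_eq_iterate_iff_of_lt_minimalPeriod (mem_range.1 hm) (mem_range.1 hn)).1 hmn
  rw [← prod_image hinj]
  congr 1
  ext y
  simp only [mem_filter, mem_univ, true_and, mem_image, mem_range]
  constructor
  · intro hxy
    obtain ⟨n, rfl⟩ := hxy.exists_nat_pow_eq
    have hpos := minimalPeriod_pos_of_mem_periodicPts (g.injective.mem_periodicPts x)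
    refine ⟨n % minimalPeriod g x, Nat.mod_lt _ hpos, ?_⟩
    simp only [← iterate_eq_pow, iterate_mod_minimalPeriod_eq]
  · rintro ⟨k, -, rfl⟩
    exact SameCycle.refl g x |>.pow_right

theorem prod_eq_prod_of_forall_prod_range_minimalPeriod_eq [Fintype α] [CommMonoid M]
    (g : Perm α) {u v : α → M}
    (h : ∀ x, ∏ k ∈ range (minimalPeriod g x), u ((g ^ k) x) =
      ∏ k ∈ range (minimalPeriod g x), v ((g ^ k) x)) :
    ∏ x, u x = ∏ x, v x := by
  classical
  rw [prod_partition (SameCycle.setoid g), prod_partition (SameCycle.setoid g)]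
  refine prod_congr rfl fun q _ => ?_
  induction q using Quotient.inductionOn with
  | h x =>
    have hcycle : ∀ y, (⟦y⟧ : Quotient (SameCycle.setoid g)) = ⟦x⟧ ↔ g.SameCycle x y :=
      fun y => Quotient.eq.trans sameCycle_comm
    simp only [hcycle, prod_sameCycle_eq_prod_range, h]

theorem exists_eq_prodShear_of_fst_apply (g : Perm α) (f : Perm (α × β))
    (hf : ∀ a b, (f (a, b)).1 = g a) : ∃ σ : α → Perm β, f = prodShear g σ := by
  have hbij : ∀ a, Bijective fun b => (f (a, b)).2 := by
    refine fun a => ⟨fun b b' hbb' => ?_, fun b' => ?_⟩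
    · have : f (a, b) = f (a, b') := Prod.ext (by rw [hf, hf]) hbb'
      exact congrArg Prod.snd (f.injective this)
    · obtain ⟨⟨a', b⟩, hab⟩ := f.surjective (g a, b')
      obtain rfl : a' = a := g.injective (by rw [← hf, hab])
      exact ⟨b, congrArg Prod.snd hab⟩
  refine ⟨fun a => ofBijective _ (hbij a), ?_⟩
  ext ⟨a, b⟩ <;> simp [hf]

theorem sign_prodShear [Fintype α] [DecidableEq α] [Fintype β] [DecidableEq β]
    (g : Perm α) (σ : α → Perm β) :
    sign (prodShear g σ) = sign g ^ Fintype.card β * ∏ a, sign (σ a) := by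
  have hshear : prodShear g σ = prodCongrLeft (fun _ => g) * prodCongrRight σ := by
    ext ⟨a, b⟩ <;> rfl
  rw [hshear, map_mul, sign_prodCongrLeft, sign_prodCongrRight, prod_const, card_univ]

def shearFiberPow (g : Perm α) (σ : α → Perm β) : ℕ → α → Perm β
  | 0, _ => 1
  | n + 1, a => σ ((g ^ n) a) * shearFiberPow g σ n a

theorem prodShear_pow (g : Perm α) (σ : α → Perm β) (n : ℕ) :
    (prodShear g σ : Perm (α × β)) ^ n = prodShear (g ^ n) (shearFiberPow g σ n) := by
  induction n with
  | zero => ext <;> rfl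
  | succ n ih =>
    rw [pow_succ', ih]
    ext <;> simp [shearFiberPow, pow_succ']

theorem sign_shearFiberPow [Fintype β] [DecidableEq β] (g : Perm α) (σ : α → Perm β)
    (n : ℕ) (a : α) :
    sign (shearFiberPow g σ n a) = ∏ k ∈ range n, sign (σ ((g ^ k) a)) := by
  induction n with
  | zero => simp [shearFiberPow]
  | succ n ih => rw [shearFiberPow, map_mul, ih, prod_range_succ, mul_comm]

theorem apply_true_eq_true_iff_sign_eq_one (p : Perm Bool) : p true = true ↔ sign p = 1 := by
  revert p
  decide

theorem prodShear_pow_minimalPeriod_apply_eq_self_iff [Fintype α] [DecidableEq α]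
    (g : Perm α) (σ : α → Perm Bool) (a : α) :
    ((prodShear g σ : Perm (α × Bool)) ^ minimalPeriod g a) (a, true) = (a, true) ↔
      ∏ k ∈ range (minimalPeriod g a), sign (σ ((g ^ k) a)) = 1 := by
  have hperiodic : (g ^ minimalPeriod g a) a = a := by
    rw [← iterate_eq_pow]
    exact isPeriodicPt_minimalPeriod g a
  rw [prodShear_pow, prodShear_apply, ← sign_shearFiberPow,
    ← apply_true_eq_true_iff_sign_eq_one]
  simp [hperiodic]

end Equiv.Perm

theorem Int.units_eq_iff_eq_one_iff {u v : ℤˣ} : u = v ↔ (u = 1 ↔ v = 1) := by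
  rcases Int.units_eq_one_or u with rfl | rfl <;> rcases Int.units_eq_one_or v with rfl | rfl <;>
    decide

open Equiv.Perm in
theorem sign_of_lift_depends_only_on_swapped_fibers
    {α : Type*} [Fintype α] [DecidableEq α]
    (g : Equiv.Perm α) (f₁ f₂ : Equiv.Perm (α × Bool))
    (hf₁ : ∀ (a : α) (b : Bool), (f₁ (a, b)).1 = g a)
    (hf₂ : ∀ (a : α) (b : Bool), (f₂ (a, b)).1 = g a)
    (h : ∀ a : α,
      ((f₁ ^ Function.minimalPeriod g a) (a, true) = (a, true)) ↔
      ((f₂ ^ Function.minimalPeriod g a) (a, true) = (a, true))) :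
    Equiv.Perm.sign f₁ = Equiv.Perm.sign f₂ := by
  obtain ⟨σ₁, rfl⟩ := exists_eq_prodShear_of_fst_apply g f₁ hf₁
  obtain ⟨σ₂, rfl⟩ := exists_eq_prodShear_of_fst_apply g f₂ hf₂
  rw [sign_prodShear, sign_prodShear, Fintype.card_bool, Int.units_sq, one_mul, one_mul]
  refine prod_eq_prod_of_forall_prod_range_minimalPeriod_eq g fun a => ?_
  rw [Int.units_eq_iff_eq_one_iff, ← prodShear_pow_minimalPeriod_apply_eq_self_iff,
    ← prodShear_pow_minimalPeriod_apply_eq_self_iff]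
  exact h a
end

section
/- Let α be a finite type with decidable equality, let g be a permutation of α, and let f be a permutation of α × Bool lifting g (i.e. (f (a,b)).1 = g a for all a, b). If a, a' : α lie in the same cycle of g (g.SameCycle a a'), then f swaps the fiber over a if and only if f swaps the fiber over a': that is, (f ^ Function.minimalPeriod g a) (a, true) = (a, true) ↔ (f ^ Function.minimalPeriod g a') (a', true) = (a', true). -/
/-!
Let `n` be the common length of the `g`-cycle through `a` and `a'`, and write `a' = gʲ a`.
Since `f` lifts `g`, the permutation `fⁿ` maps each fiber over the cycle to itself, and it
commutes with `fʲ`, which carries `(a, true)` to some point `(a', b)` of the fiber over `a'`.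
So `fⁿ` fixes `(a, true)` iff it fixes `(a', b)`, and a permutation of a two-point fiber fixes
one point iff it fixes the other.
-/

open Function

namespace Equiv.Perm

variable {α : Type*}

theorem apply_eq_self_iff_of_commute {σ τ : Perm α} (h : Commute σ τ) (x : α) :
    σ (τ x) = τ x ↔ σ x = x := by
  rw [← mul_apply, h.eq, mul_apply, τ.injective.eq_iff]

theorem SameCycle.minimalPeriod_eq {g : Perm α} {a a' : α} (h : g.SameCycle a a') :
    minimalPeriod g a = minimalPeriod g a' := by
  obtain ⟨j, rfl⟩ := h
  refine minimalPeriod_eq_minimalPeriod_iff.mpr fun n => ?_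
  simp only [IsPeriodicPt, IsFixedPt, iterate_eq_pow]
  exact (apply_eq_self_iff_of_commute ((Commute.self_zpow g j).pow_left n) a).symm

theorem fst_zpow_apply_of_fst_apply {β : Type*} {g : Perm α} {f : Perm (α × β)}
    (hf : ∀ x, (f x).1 = g x.1) (k : ℤ) (x : α × β) : ((f ^ k) x).1 = (g ^ k) x.1 := by
  induction k using Int.induction_on generalizing x with
  | zero => rfl
  | succ n ih => rw [zpow_add_one, zpow_add_one, mul_apply, mul_apply, ih, hf]
  | pred n ih =>
    have hinv : (f⁻¹ x).1 = g⁻¹ x.1 := eq_inv_iff_eq.mpr (by simp [← hf])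
    rw [zpow_sub_one, zpow_sub_one, mul_apply, mul_apply, ih, hinv]

theorem apply_mk_eq_self_iff_of_fst_eq {σ : Perm (α × Bool)} {a : α}
    (hσ : ∀ b, (σ (a, b)).1 = a) (b c : Bool) :
    σ (a, b) = (a, b) ↔ σ (a, c) = (a, c) := by
  suffices key : ∀ b c, σ (a, b) = (a, b) → σ (a, c) = (a, c) from ⟨key b c, key c b⟩
  intro b c hb
  rcases eq_or_ne c b with rfl | hcb
  · exact hb
  obtain ⟨d, hd⟩ : ∃ d, σ (a, c) = (a, d) := ⟨_, Prod.ext (hσ c) rfl⟩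
  have hdb : d ≠ b := by
    rintro rfl
    exact hcb (by simpa using σ.injective (hd.trans hb.symm))
  rw [hd, Prod.mk.injEq, eq_self, true_and]
  revert hcb hdb
  cases b <;> cases c <;> cases d <;> decide

end Equiv.Perm

theorem swap_fiber_constant_on_cycles_general
    {α : Type*}
    (g : Equiv.Perm α) (f : Equiv.Perm (α × Bool))
    (hf : ∀ (a : α) (b : Bool), (f (a, b)).1 = g a)
    (a a' : α) (hcyc : g.SameCycle a a') :
    (f ^ Function.minimalPeriod g a) (a, true) = (a, true) ↔
    (f ^ Function.minimalPeriod g a') (a', true) = (a', true) := by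
  have hlift := Equiv.Perm.fst_zpow_apply_of_fst_apply (fun x => hf x.1 x.2)
  rw [← hcyc.minimalPeriod_eq]
  set n := minimalPeriod g a
  obtain ⟨j, hj⟩ := hcyc
  have hperiod : (g ^ n) a' = a' := by
    rw [← hj, Equiv.Perm.apply_eq_self_iff_of_commute ((Commute.self_zpow g j).pow_left n),
      ← Equiv.Perm.iterate_eq_pow]
    exact iterate_minimalPeriod
  have hfiber : ∀ c, ((f ^ n) (a', c)).1 = a' := fun c => by
    simpa only [zpow_natCast] using (hlift n (a', c)).trans hperiod
  obtain ⟨b, hmove⟩ : ∃ b, (f ^ j) (a, true) = (a', b) := ⟨_, Prod.ext (by rw [hlift, hj]) rfl⟩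
  calc (f ^ n) (a, true) = (a, true)
      ↔ (f ^ n) ((f ^ j) (a, true)) = (f ^ j) (a, true) :=
        (Equiv.Perm.apply_eq_self_iff_of_commute ((Commute.self_zpow f j).pow_left n) _).symm
    _ ↔ (f ^ n) (a', b) = (a', b) := by rw [hmove]
    _ ↔ (f ^ n) (a', true) = (a', true) :=
      Equiv.Perm.apply_mk_eq_self_iff_of_fst_eq hfiber _ _

theorem swap_fiber_constant_on_cycles
    {α : Type*} [Fintype α] [DecidableEq α]
    (g : Equiv.Perm α) (f : Equiv.Perm (α × Bool))
    (hf : ∀ (a : α) (b : Bool), (f (a, b)).1 = g a)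
    (a a' : α) (hcyc : g.SameCycle a a') :
    (f ^ Function.minimalPeriod g a) (a, true) = (a, true) ↔
    (f ^ Function.minimalPeriod g a') (a', true) = (a', true) :=
  swap_fiber_constant_on_cycles_general g f hf a a' hcyc
end

section
/- Let α be a finite type with decidable equality, let g be a permutation of α, and let f be a permutation of α × Bool lifting g (i.e. (f (a,b)).1 = g a for all a, b). Then for every a : α and b : Bool, the minimal period of f at (a,b) equals either ℓ(a) or 2·ℓ(a), where ℓ(a) = Function.minimalPeriod g a: that is, Function.minimalPeriod f (a,b) = Function.minimalPeriod g a ∨ Function.minimalPeriod f (a,b) = 2 * Function.minimalPeriod g a. -/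
/-!
Projecting to `α` semiconjugates `f` to `g`, so `ℓ(a)` divides the minimal period of `(a, b)`.
Conversely `f^[ℓ(a)]` maps the two-point fibre over `a` injectively to itself, so it acts there as
a permutation of `Bool`, whose square is the identity; hence the minimal period divides `2 ℓ(a)`.
-/

open Function

theorem Nat.eq_or_eq_two_mul_of_dvd_of_dvd_two_mul {l m : ℕ} (hlm : l ∣ m) (hml : m ∣ 2 * l) :
    m = l ∨ m = 2 * l := by
  obtain ⟨k, rfl⟩ := hlm
  rcases Nat.eq_zero_or_pos l with rfl | hl
  · simp
  have hk : k ∣ 2 := Nat.dvd_of_mul_dvd_mul_left hl (mul_comm 2 l ▸ hml)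
  rcases (Nat.dvd_prime Nat.prime_two).mp hk with rfl | rfl <;> simp [mul_comm]

theorem Function.Semiconj.minimalPeriod_dvd {α β : Type*} {π : β → α} {f : β → β} {g : α → α}
    (h : Semiconj π f g) (x : β) : minimalPeriod g (π x) ∣ minimalPeriod f x :=
  ((isPeriodicPt_minimalPeriod f x).map h).minimalPeriod_dvd

theorem Bool.apply_apply_of_injective {φ : Bool → Bool} (hφ : Injective φ) (b : Bool) :
    φ (φ b) = b := by
  revert φ b
  decide

theorem isPeriodicPt_two_mul_minimalPeriod_of_semiconj_fst {α : Type*} {f : α × Bool → α × Bool}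
    {g : α → α} (hf : Injective f) (h : Semiconj Prod.fst f g) (a : α) (b : Bool) :
    IsPeriodicPt f (2 * minimalPeriod g a) (a, b) := by
  set ℓ := minimalPeriod g a
  set φ : Bool → Bool := fun c => (f^[ℓ] (a, c)).2
  have hfibre : ∀ c, f^[ℓ] (a, c) = (a, φ c) := fun c =>
    Prod.ext (((h.iterate_right ℓ) (a, c)).trans (isPeriodicPt_minimalPeriod g a)) rfl
  have hφ : Injective φ := fun c c' hcc' => by
    simpa using (hf.iterate ℓ) ((hfibre c).trans ((congrArg _ hcc').trans (hfibre c').symm))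
  rw [IsPeriodicPt, IsFixedPt, two_mul, iterate_add_apply, hfibre, hfibre, Bool.apply_apply_of_injective hφ]

theorem lifted_cycle_length_dichotomy_general
    {α : Type*}
    (g : Equiv.Perm α) (f : Equiv.Perm (α × Bool))
    (hf : ∀ (a : α) (b : Bool), (f (a, b)).1 = g a)
    (a : α) (b : Bool) :
    Function.minimalPeriod f (a, b) = Function.minimalPeriod g a ∨
    Function.minimalPeriod f (a, b) = 2 * Function.minimalPeriod g a := by
  have hsemi : Semiconj Prod.fst f g := fun p => hf p.1 p.2
  exact Nat.eq_or_eq_two_mul_of_dvd_of_dvd_two_mul (hsemi.minimalPeriod_dvd (a, b))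
    (isPeriodicPt_two_mul_minimalPeriod_of_semiconj_fst f.injective hsemi a b).minimalPeriod_dvd

theorem lifted_cycle_length_dichotomy
    {α : Type*} [Fintype α] [DecidableEq α]
    (g : Equiv.Perm α) (f : Equiv.Perm (α × Bool))
    (hf : ∀ (a : α) (b : Bool), (f (a, b)).1 = g a)
    (a : α) (b : Bool) :
    Function.minimalPeriod f (a, b) = Function.minimalPeriod g a ∨
    Function.minimalPeriod f (a, b) = 2 * Function.minimalPeriod g a :=
  lifted_cycle_length_dichotomy_general g f hf a b
end

section
/- Let α be a finite type with decidable equality, let g be a permutation of α, and let f be a permutation of α × Bool lifting g (i.e. (f (a,b)).1 = g a for all a, b). Let a : α and set ℓ(a) = Function.minimalPeriod g a. If f does not swap the fiber over a, i.e. (f ^ ℓ(a)) (a, true) = (a, true), then for every b : Bool one has Function.minimalPeriod f (a, b) = ℓ(a), and moreover (a, true) and (a, false) do not lie in the same cycle of f, i.e. ¬ f.SameCycle (a, true) (a, false). -/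
/-!
Since `f` lifts `g`, the power `f ^ ℓ` with `ℓ = minimalPeriod g a` maps the two-point fiber over
`a` to itself; fixing `(a, true)`, it must fix `(a, false)` too. Periods of a lift are multiples of
the period downstairs, so both points have `f`-period exactly `ℓ`. If `f ^ n` sent `(a, true)` to
`(a, false)`, projecting would give `ℓ ∣ n`, and then `f ^ n` would fix `(a, true)`.
-/

open Function

namespace Equiv.Perm

variable {α : Type*}

theorem zpow_apply_eq_self_iff_minimalPeriod_dvd {σ : Perm α} {x : α} {n : ℤ} :
    (σ ^ n) x = x ↔ (minimalPeriod σ x : ℤ) ∣ n :=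
  MulAction.zpow_smul_eq_iff_minimalPeriod_dvd (a := σ) (b := x)

theorem pow_apply_eq_self_iff_minimalPeriod_dvd {σ : Perm α} {x : α} {n : ℕ} :
    (σ ^ n) x = x ↔ minimalPeriod σ x ∣ n :=
  MulAction.pow_smul_eq_iff_minimalPeriod_dvd (a := σ) (b := x)

theorem apply_eq_self_of_mapsTo_fiber {σ : Perm (α × Bool)} {a : α}
    (hσ : ∀ b, (σ (a, b)).1 = a) {b : Bool} (hb : σ (a, b) = (a, b)) (c : Bool) :
    σ (a, c) = (a, c) := by
  by_cases hcb : c = b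
  · rwa [hcb]
  have hd : (σ (a, c)).2 ≠ b := fun hd =>
    hcb (congrArg Prod.snd (σ.injective ((Prod.ext (hσ c) hd).trans hb.symm)))
  refine Prod.ext (hσ c) ?_
  generalize (σ (a, c)).2 = d at hd
  revert hd hcb; cases b <;> cases c <;> cases d <;> simp

variable {g : Perm α} {f : Perm (α × Bool)}

theorem lift_inv_apply_fst (hf : ∀ a b, (f (a, b)).1 = g a) (x : α × Bool) :
    (f⁻¹ x).1 = g⁻¹ x.1 := by
  rw [eq_inv_iff_eq, ← hf (f⁻¹ x).1 (f⁻¹ x).2, Prod.mk.eta, inv_def, apply_symm_apply]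

theorem lift_zpow_apply_fst (hf : ∀ a b, (f (a, b)).1 = g a) (n : ℤ) (x : α × Bool) :
    ((f ^ n) x).1 = (g ^ n) x.1 := by
  induction n using Int.induction_on generalizing x with
  | zero => rfl
  | succ n ih => rw [zpow_add_one, zpow_add_one, mul_apply, mul_apply, ih, hf]
  | pred n ih => rw [zpow_sub_one, zpow_sub_one, mul_apply, mul_apply, ih, lift_inv_apply_fst hf]

theorem lift_pow_apply_fst (hf : ∀ a b, (f (a, b)).1 = g a) (n : ℕ) (x : α × Bool) :
    ((f ^ n) x).1 = (g ^ n) x.1 := by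
  exact_mod_cast lift_zpow_apply_fst hf n x

theorem minimalPeriod_dvd_minimalPeriod_lift (hf : ∀ a b, (f (a, b)).1 = g a) (x : α × Bool) :
    minimalPeriod g x.1 ∣ minimalPeriod f x := by
  rw [← pow_apply_eq_self_iff_minimalPeriod_dvd, ← lift_pow_apply_fst hf,
    pow_apply_eq_self_iff_minimalPeriod_dvd.2 dvd_rfl]

end Equiv.Perm

open Equiv.Perm in
theorem lift_not_swapping_fiber_splits_into_two_cycles_general
    {α : Type*}
    (g : Equiv.Perm α) (f : Equiv.Perm (α × Bool))
    (hf : ∀ (a : α) (b : Bool), (f (a, b)).1 = g a)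
    (a : α)
    (hswap : (f ^ Function.minimalPeriod g a) (a, true) = (a, true)) :
    (∀ b : Bool, Function.minimalPeriod f (a, b) = Function.minimalPeriod g a) ∧
    ¬ f.SameCycle (a, true) (a, false) := by
  have hfiber (b : Bool) : ((f ^ minimalPeriod g a) (a, b)).1 = a := by
    rw [lift_pow_apply_fst hf, pow_apply_eq_self_iff_minimalPeriod_dvd.2 dvd_rfl]
  have hfix := apply_eq_self_of_mapsTo_fiber hfiber hswap
  have hperiod (b : Bool) : minimalPeriod f (a, b) = minimalPeriod g a :=
    Nat.dvd_antisymm (pow_apply_eq_self_iff_minimalPeriod_dvd.1 (hfix b))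
      (minimalPeriod_dvd_minimalPeriod_lift hf (a, b))
  refine ⟨hperiod, fun ⟨n, hn⟩ => ?_⟩
  have hgn : (g ^ n) a = a := by rw [← lift_zpow_apply_fst hf n (a, true), hn]
  rw [zpow_apply_eq_self_iff_minimalPeriod_dvd, ← hperiod true,
    ← zpow_apply_eq_self_iff_minimalPeriod_dvd, hn] at hgn
  simp at hgn

theorem lift_not_swapping_fiber_splits_into_two_cycles
    {α : Type*} [Fintype α] [DecidableEq α]
    (g : Equiv.Perm α) (f : Equiv.Perm (α × Bool))
    (hf : ∀ (a : α) (b : Bool), (f (a, b)).1 = g a)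
    (a : α)
    (hswap : (f ^ Function.minimalPeriod g a) (a, true) = (a, true)) :
    (∀ b : Bool, Function.minimalPeriod f (a, b) = Function.minimalPeriod g a) ∧
    ¬ f.SameCycle (a, true) (a, false) :=
  lift_not_swapping_fiber_splits_into_two_cycles_general g f hf a hswap
end
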